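/- Semigroup-type convolution property: for real α > 0, β₁, β₂ > 0, γ₁, γ₂ ∈ ℂ, λ ∈ ℂ, and t > 0, ∫_0^t (t−u)^{β₁−1} E_{α,β₁}^{γ₁}(λ(t−u)^α) u^{β₂−1} E_{α,β₂}^{γ₂}(λ u^α) du = t^{β₁+β₂−1} E_{α,β₁+β₂}^{γ₁+γ₂}(λ t^α). -/

import Mathlib

open scoped Real
open Complex Filter

/-- The Prabhakar (three-parameter Mittag-Leffler) function, defined by its
entire power series, with reciprocal Gamma understood as `0` at poles. -/
noncomputable def prabhakar (α β γ z : ℂ) : ℂ :=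
  ∑' k : ℕ, (ascPochhammer ℂ k).eval γ * z ^ k / ((Nat.factorial k : ℂ) * Complex.Gamma (α * k + β))

/-
The kernels expand, for `x > 0`, into absolutely convergent power-type series
`x^{β-1} E_{α,β}^γ(λ x^α) = ∑ₖ cₖ λᵏ x^{αk+β-1}`; absolute convergence follows from the ratio test,
since `Γ(x) / Γ(x + α) → 0` by log-convexity of `Γ`. The Cauchy product of the two series is
dominated by a multiple of `(t-u)^{β₁-1} u^{β₂-1}`, so it can be integrated term by term. Each term
is a Beta integral `∫₀ᵗ (t-u)^{p-1} u^{q-1} du = t^{p+q-1} Γ(p)Γ(q)/Γ(p+q)`, which cancels the Gamma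
factors of the coefficients, and the Chu–Vandermonde identity for rising factorials collects the
`n`-th antidiagonal into the `n`-th coefficient of the right-hand side.
-/

open Finset Nat MeasureTheory

theorem ascPochhammer_eval_add {R : Type*} [CommSemiring R] (a b : R) (n : ℕ) :
    (ascPochhammer R n).eval (a + b) =
      ∑ p ∈ antidiagonal n, (n.choose p.1 : R) *
        ((ascPochhammer R p.1).eval a * (ascPochhammer R p.2).eval b) := by
  induction n with
  | zero => simp
  | succ n ih =>
    rw [sum_antidiagonal_choose_succ_mul
      (fun i j => (ascPochhammer R i).eval a * (ascPochhammer R j).eval b), ← sum_add_distrib,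
      ascPochhammer_succ_eval, ih, sum_mul]
    refine sum_congr rfl fun p hp => ?_
    obtain rfl : p.1 + p.2 = n := mem_antidiagonal.mp hp
    rw [choose_symm_add, ascPochhammer_succ_eval, ascPochhammer_succ_eval]
    push_cast
    ring

theorem Real.mul_Gamma_le_Gamma_add_mul_rpow {x m : ℝ} (hx : 0 < x) (hm : 0 < m) (hm1 : m ≤ 1) :
    x * Real.Gamma x ≤ Real.Gamma (x + m) * (x + m) ^ (1 - m) := by
  rw [← Real.Gamma_add_one hx.ne']
  rcases hm1.lt_or_eq with hm1 | rfl
  · have hxm : 0 < x + m := by linarith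
    have h := Real.Gamma_mul_add_mul_le_rpow_Gamma_mul_rpow_Gamma hxm (by linarith : 0 < x + m + 1)
      hm (by linarith : 0 < 1 - m) (by ring)
    rwa [show m * (x + m) + (1 - m) * (x + m + 1) = x + 1 by ring, Real.Gamma_add_one hxm.ne',
      Real.mul_rpow hxm.le (Real.Gamma_pos_of_pos hxm).le, mul_left_comm,
      ← Real.rpow_add (Real.Gamma_pos_of_pos hxm), add_sub_cancel, Real.rpow_one, mul_comm] at h
  · simp

theorem Real.tendsto_Gamma_div_Gamma_add_atTop {a : ℝ} (ha : 0 < a) :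
    Tendsto (fun x => Real.Gamma x / Real.Gamma (x + a)) atTop (nhds 0) := by
  set m := min a 1
  have hm : 0 < m := lt_min ha one_pos
  have hbound : Tendsto (fun x => 2 * (x + m) ^ (-m)) atTop (nhds 0) := by
    simpa using ((tendsto_rpow_neg_atTop hm).comp
      (tendsto_atTop_add_const_right _ m tendsto_id)).const_mul 2
  refine tendsto_of_tendsto_of_tendsto_of_le_of_le' tendsto_const_nhds hbound ?_ ?_
  · filter_upwards [eventually_gt_atTop 0] with x hx
    exact div_nonneg (Real.Gamma_pos_of_pos hx).le (Real.Gamma_pos_of_pos (by linarith)).le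
  · filter_upwards [eventually_ge_atTop 2] with x hx
    have hxm : 0 < x + m := by linarith
    have hmono : Real.Gamma (x + m) ≤ Real.Gamma (x + a) :=
      Real.Gamma_strictMonoOn_Ici.monotoneOn (by simp; linarith) (by simp; linarith)
        (by simp [m])
    have hkey := Real.mul_Gamma_le_Gamma_add_mul_rpow (x := x) (by linarith) hm (min_le_right a 1)
    rw [div_le_iff₀ (Real.Gamma_pos_of_pos (by linarith))]
    calc Real.Gamma x ≤ Real.Gamma (x + m) * (x + m) ^ (1 - m) / x := by
          rw [le_div_iff₀ (by linarith)]; linarith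
      _ = Real.Gamma (x + m) * ((x + m) ^ (-m) * ((x + m) / x)) := by
          rw [Real.rpow_sub hxm, Real.rpow_neg hxm.le, Real.rpow_one]; ring
      _ ≤ Real.Gamma (x + a) * ((x + m) ^ (-m) * 2) := by
          gcongr
          rw [div_le_iff₀ (by linarith : (0:ℝ) < x)]; linarith [min_le_right a 1]
      _ = _ := by ring

theorem integral_sub_rpow_mul_rpow {p q t : ℝ} (hp : 0 < p) (hq : 0 < q) (ht : 0 < t) :
    ∫ u in 0..t, (t - u) ^ (p - 1) * u ^ (q - 1) =
      t ^ (p + q - 1) * (Real.Gamma p * Real.Gamma q / Real.Gamma (p + q)) := by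
  have hbeta : Complex.betaIntegral q p =
      Complex.Gamma q * Complex.Gamma p / Complex.Gamma (q + p) := by
    rw [eq_div_iff (Complex.Gamma_ne_zero_of_re_pos (by simp; linarith)),
      Complex.Gamma_mul_Gamma_eq_betaIntegral (by simpa) (by simpa), mul_comm]
  have h := Complex.betaIntegral_scaled q p ht
  rw [hbeta] at h
  apply Complex.ofReal_injective
  rw [← intervalIntegral.integral_ofReal]
  convert h using 1
  · refine intervalIntegral.integral_congr fun u hu => ?_
    rw [Set.uIcc_of_le ht.le] at hu
    rw [Complex.ofReal_mul, Complex.ofReal_cpow (by linarith [hu.2]),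
      Complex.ofReal_cpow hu.1, mul_comm]
    push_cast
    rfl
  · push_cast [Complex.ofReal_cpow ht.le, ← Complex.Gamma_ofReal]
    ring_nf

theorem intervalIntegrable_sub_rpow_mul_rpow {p q t : ℝ} (hp : 0 < p) (hq : 0 < q) (ht : 0 < t) :
    IntervalIntegrable (fun u => (t - u) ^ (p - 1) * u ^ (q - 1)) volume 0 t := by
  -- A non-integrable function has integral `0`, but the Beta integral is positive.
  by_contra h
  have hpos : 0 < t ^ (p + q - 1) * (Real.Gamma p * Real.Gamma q / Real.Gamma (p + q)) := by
    have := Real.Gamma_pos_of_pos hp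
    have := Real.Gamma_pos_of_pos hq
    have := Real.Gamma_pos_of_pos (add_pos hp hq)
    positivity
  rw [← integral_sub_rpow_mul_rpow hp hq ht, intervalIntegral.integral_undef h] at hpos
  exact hpos.false

theorem Real.rpow_mul_natCast_add_sub_one {x : ℝ} (hx : 0 < x) (α β : ℝ) (k : ℕ) :
    x ^ (α * k + β - 1) = x ^ (β - 1) * (x ^ α) ^ k := by
  rw [← Real.rpow_natCast, ← Real.rpow_mul hx.le, ← Real.rpow_add hx]
  ring_nf

noncomputable def prabhakarCoeff (α β γ : ℂ) (k : ℕ) : ℂ :=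
  (ascPochhammer ℂ k).eval γ / (k ! * Complex.Gamma (α * k + β))

theorem prabhakar_eq_tsum (α β γ z : ℂ) :
    prabhakar α β γ z = ∑' k, prabhakarCoeff α β γ k * z ^ k := by
  simp only [prabhakar, prabhakarCoeff, div_mul_eq_mul_div]

theorem Complex.Gamma_ofReal_mul_natCast_add (α β : ℝ) (k : ℕ) :
    Complex.Gamma (α * k + β) = Real.Gamma (α * k + β) := by
  rw [← Complex.Gamma_ofReal]; push_cast; rfl

theorem prabhakarCoeff_succ {α β : ℂ} (γ : ℂ) {k : ℕ} (h : Complex.Gamma (α * k + β) ≠ 0) :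
    prabhakarCoeff α β γ (k + 1) = prabhakarCoeff α β γ k * ((γ + k) / (k + 1)) *
      (Complex.Gamma (α * k + β) / Complex.Gamma (α * k + β + α)) := by
  simp only [prabhakarCoeff, ascPochhammer_succ_eval, factorial_succ]
  push_cast
  rw [show α * (k + 1) + β = α * k + β + α by ring]
  field_simp
  rw [mul_div_mul_right _ _ (by rwa [mul_comm] : Complex.Gamma (k * α + β) ≠ 0)]

theorem summable_norm_prabhakarCoeff_mul_pow {α β : ℝ} (hα : 0 < α) (hβ : 0 < β) (γ z : ℂ) :
    Summable fun k => ‖prabhakarCoeff α β γ k * z ^ k‖ := by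
  have hΓ : ∀ k : ℕ, 0 < Real.Gamma (α * k + β) := fun k => Real.Gamma_pos_of_pos (by positivity)
  have hratio : Tendsto (fun k : ℕ => (‖γ‖ + 1) * ‖z‖ *
      (Real.Gamma (α * k + β) / Real.Gamma (α * k + β + α))) atTop (nhds 0) := by
    simpa using ((Real.tendsto_Gamma_div_Gamma_add_atTop hα).comp <|
      tendsto_atTop_add_const_right _ β <|
        (tendsto_natCast_atTop_atTop (R := ℝ)).const_mul_atTop hα).const_mul ((‖γ‖ + 1) * ‖z‖)
  refine summable_of_ratio_norm_eventually_le (r := 1 / 2) (by norm_num) ?_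
  filter_upwards [hratio.eventually (ge_mem_nhds one_half_pos)] with k hk
  have hpoch : ‖γ + k‖ / (k + 1) ≤ ‖γ‖ + 1 := by
    rw [div_le_iff₀ (by positivity)]
    calc ‖γ + k‖ ≤ ‖γ‖ + k := by simpa using norm_add_le γ k
      _ ≤ (‖γ‖ + 1) * (k + 1) := by nlinarith [norm_nonneg γ]
  have hΓratio : ‖Complex.Gamma (α * k + β) / Complex.Gamma (α * k + β + α)‖ =
      Real.Gamma (α * k + β) / Real.Gamma (α * k + β + α) := by
    rw [Complex.Gamma_ofReal_mul_natCast_add, show (α : ℂ) * k + β + α = ((α * k + β + α : ℝ) : ℂ)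
      by push_cast; ring, Complex.Gamma_ofReal, ← Complex.ofReal_div, Complex.norm_real,
      Real.norm_of_nonneg (div_nonneg (hΓ k).le (Real.Gamma_pos_of_pos (by positivity)).le)]
  rw [norm_norm, norm_norm, prabhakarCoeff_succ γ (by
    rw [Complex.Gamma_ofReal_mul_natCast_add]; exact ofReal_ne_zero.2 (hΓ k).ne'), pow_succ]
  calc ‖prabhakarCoeff α β γ k * ((γ + k) / (k + 1)) *
        (Complex.Gamma (α * k + β) / Complex.Gamma (α * k + β + α)) * (z ^ k * z)‖
      = ‖prabhakarCoeff α β γ k * z ^ k‖ * (‖γ + k‖ / (k + 1) * ‖z‖ *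
          (Real.Gamma (α * k + β) / Real.Gamma (α * k + β + α))) := by
        have hk1 : ‖(k : ℂ) + 1‖ = k + 1 := by exact_mod_cast Complex.norm_natCast (k + 1)
        rw [← hΓratio]
        simp only [norm_mul, norm_div, hk1]
        ring
    _ ≤ ‖prabhakarCoeff α β γ k * z ^ k‖ * ((‖γ‖ + 1) * ‖z‖ *
          (Real.Gamma (α * k + β) / Real.Gamma (α * k + β + α))) := by
        gcongr
    _ ≤ 1 / 2 * ‖prabhakarCoeff α β γ k * z ^ k‖ := by
        rw [mul_comm (1 / 2 : ℝ)]; gcongr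

theorem sum_antidiagonal_prabhakarCoeff_mul_Gamma {α β₁ β₂ : ℂ} (γ₁ γ₂ : ℂ)
    (hΓ₁ : ∀ j : ℕ, Complex.Gamma (α * j + β₁) ≠ 0) (hΓ₂ : ∀ k : ℕ, Complex.Gamma (α * k + β₂) ≠ 0)
    (n : ℕ) :
    ∑ p ∈ antidiagonal n, prabhakarCoeff α β₁ γ₁ p.1 * prabhakarCoeff α β₂ γ₂ p.2 *
        (Complex.Gamma (α * p.1 + β₁) * Complex.Gamma (α * p.2 + β₂) /
          Complex.Gamma (α * n + (β₁ + β₂))) =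
      prabhakarCoeff α (β₁ + β₂) (γ₁ + γ₂) n := by
  have hterm : ∀ p ∈ antidiagonal n,
      prabhakarCoeff α β₁ γ₁ p.1 * prabhakarCoeff α β₂ γ₂ p.2 *
        (Complex.Gamma (α * p.1 + β₁) * Complex.Gamma (α * p.2 + β₂) /
          Complex.Gamma (α * n + (β₁ + β₂))) =
      (n.choose p.1 : ℂ) * ((ascPochhammer ℂ p.1).eval γ₁ * (ascPochhammer ℂ p.2).eval γ₂) /
        (n ! * Complex.Gamma (α * n + (β₁ + β₂))) := by
    rintro ⟨j, k⟩ hp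
    obtain rfl : j + k = n := mem_antidiagonal.mp hp
    have := hΓ₁ j
    have := hΓ₂ k
    have : ((j + k)! : ℂ) ≠ 0 := Nat.cast_ne_zero.2 (factorial_ne_zero _)
    simp only [prabhakarCoeff, cast_add_choose]
    field_simp
  rw [sum_congr rfl hterm, ← sum_div, ← ascPochhammer_eval_add, prabhakarCoeff]

noncomputable def prabhakarKernel (α β : ℝ) (γ lam : ℂ) (x : ℝ) : ℂ :=
  ((x ^ (β - 1) : ℝ) : ℂ) * prabhakar α β γ (lam * ((x ^ α : ℝ) : ℂ))

noncomputable def prabhakarKernelTerm (α β : ℝ) (γ lam : ℂ) (x : ℝ) (k : ℕ) : ℂ :=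
  prabhakarCoeff α β γ k * lam ^ k * ((x ^ (α * k + β - 1) : ℝ) : ℂ)

section Kernel

variable {α β : ℝ} {γ lam : ℂ} {x : ℝ}

theorem prabhakarKernelTerm_eq (hx : 0 < x) (k : ℕ) :
    prabhakarKernelTerm α β γ lam x k =
      ((x ^ (β - 1) : ℝ) : ℂ) * (prabhakarCoeff α β γ k * (lam * ((x ^ α : ℝ) : ℂ)) ^ k) := by
  rw [prabhakarKernelTerm, Real.rpow_mul_natCast_add_sub_one hx]
  push_cast
  ring

theorem norm_prabhakarKernelTerm_le (hα : 0 ≤ α) (hx : 0 < x) {t : ℝ} (hxt : x ≤ t) (k : ℕ) :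
    ‖prabhakarKernelTerm α β γ lam x k‖ ≤
      x ^ (β - 1) * ‖prabhakarCoeff α β γ k * (lam * ((t ^ α : ℝ) : ℂ)) ^ k‖ := by
  rw [prabhakarKernelTerm_eq hx, norm_mul, Complex.norm_real,
    Real.norm_of_nonneg (Real.rpow_nonneg hx.le _)]
  gcongr
  simp only [norm_mul, norm_pow, Complex.norm_real]
  gcongr
  rw [Real.norm_of_nonneg (Real.rpow_nonneg hx.le _),
    Real.norm_of_nonneg (Real.rpow_nonneg (hx.le.trans hxt) _)]
  exact Real.rpow_le_rpow hx.le hxt hα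

theorem summable_norm_prabhakarKernelTerm (hα : 0 < α) (hβ : 0 < β) (hx : 0 < x) :
    Summable fun k => ‖prabhakarKernelTerm α β γ lam x k‖ :=
  ((summable_norm_prabhakarCoeff_mul_pow hα hβ γ _).mul_left (x ^ (β - 1))).of_nonneg_of_le
    (fun _ => norm_nonneg _) (norm_prabhakarKernelTerm_le hα.le hx le_rfl)

theorem hasSum_prabhakarKernelTerm (hα : 0 < α) (hβ : 0 < β) (hx : 0 < x) :
    HasSum (prabhakarKernelTerm α β γ lam x) (prabhakarKernel α β γ lam x) := by
  rw [prabhakarKernel, prabhakar_eq_tsum, funext (prabhakarKernelTerm_eq hx)]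
  exact (summable_norm_prabhakarCoeff_mul_pow hα hβ γ _).of_norm.hasSum.mul_left _

end Kernel

theorem hasSum_sum_antidiagonal_prabhakarKernelTerm {α β₁ β₂ : ℝ} (hα : 0 < α) (hβ₁ : 0 < β₁)
    (hβ₂ : 0 < β₂) (γ₁ γ₂ lam : ℂ) {x y : ℝ} (hx : 0 < x) (hy : 0 < y) :
    HasSum (fun n => ∑ p ∈ antidiagonal n,
        prabhakarKernelTerm α β₁ γ₁ lam x p.1 * prabhakarKernelTerm α β₂ γ₂ lam y p.2)
      (prabhakarKernel α β₁ γ₁ lam x * prabhakarKernel α β₂ γ₂ lam y) := by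
  have h₁ := summable_norm_prabhakarKernelTerm (γ := γ₁) (lam := lam) hα hβ₁ hx
  have h₂ := summable_norm_prabhakarKernelTerm (γ := γ₂) (lam := lam) hα hβ₂ hy
  rw [← (hasSum_prabhakarKernelTerm hα hβ₁ hx).tsum_eq,
    ← (hasSum_prabhakarKernelTerm hα hβ₂ hy).tsum_eq, tsum_mul_tsum_eq_tsum_sum_antidiagonal_of_summable_norm h₁ h₂]
  exact (summable_norm_sum_mul_antidiagonal_of_summable_norm h₁ h₂).of_norm.hasSum

section Convolution

variable {α β₁ β₂ : ℝ} (γ₁ γ₂ lam : ℂ) {t : ℝ}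

theorem prabhakarKernelTerm_mul_prabhakarKernelTerm (u : ℝ) (j k : ℕ) :
    prabhakarKernelTerm α β₁ γ₁ lam (t - u) j * prabhakarKernelTerm α β₂ γ₂ lam u k =
      prabhakarCoeff α β₁ γ₁ j * prabhakarCoeff α β₂ γ₂ k * lam ^ (j + k) *
        (((t - u) ^ (α * j + β₁ - 1) * u ^ (α * k + β₂ - 1) : ℝ) : ℂ) := by
  simp only [prabhakarKernelTerm]
  push_cast
  ring

theorem integral_prabhakarKernelTerm_mul_prabhakarKernelTerm (hα : 0 ≤ α) (hβ₁ : 0 < β₁)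
    (hβ₂ : 0 < β₂) (ht : 0 < t) (j k : ℕ) :
    ∫ u in 0..t, prabhakarKernelTerm α β₁ γ₁ lam (t - u) j * prabhakarKernelTerm α β₂ γ₂ lam u k =
      prabhakarCoeff α β₁ γ₁ j * prabhakarCoeff α β₂ γ₂ k *
        (Complex.Gamma (α * j + β₁) * Complex.Gamma (α * k + β₂) /
          Complex.Gamma (α * (j + k : ℕ) + (β₁ + β₂))) *
        lam ^ (j + k) * ((t ^ (α * (j + k : ℕ) + (β₁ + β₂) - 1) : ℝ) : ℂ) := by
  simp only [prabhakarKernelTerm_mul_prabhakarKernelTerm, intervalIntegral.integral_const_mul,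
    intervalIntegral.integral_ofReal]
  rw [integral_sub_rpow_mul_rpow (by positivity) (by positivity) ht,
    show α * j + β₁ + (α * k + β₂) = α * (j + k : ℕ) + (β₁ + β₂) by push_cast; ring]
  simp only [Complex.Gamma_ofReal_mul_natCast_add]
  push_cast [← Complex.Gamma_ofReal]
  ring

theorem intervalIntegrable_prabhakarKernelTerm_mul_prabhakarKernelTerm (hα : 0 ≤ α)
    (hβ₁ : 0 < β₁) (hβ₂ : 0 < β₂) (ht : 0 < t) (j k : ℕ) :
    IntervalIntegrable (fun u => prabhakarKernelTerm α β₁ γ₁ lam (t - u) j *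
      prabhakarKernelTerm α β₂ γ₂ lam u k) volume 0 t := by
  have h := intervalIntegrable_sub_rpow_mul_rpow (p := α * j + β₁) (q := α * k + β₂)
    (by positivity) (by positivity) ht
  simp only [prabhakarKernelTerm_mul_prabhakarKernelTerm]
  exact IntervalIntegrable.const_mul ⟨h.1.ofReal, h.2.ofReal⟩ _

theorem integral_sum_antidiagonal_prabhakarKernelTerm (hα : 0 ≤ α) (hβ₁ : 0 < β₁)
    (hβ₂ : 0 < β₂) (ht : 0 < t) (n : ℕ) :
    ∫ u in 0..t, ∑ p ∈ antidiagonal n,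
        prabhakarKernelTerm α β₁ γ₁ lam (t - u) p.1 * prabhakarKernelTerm α β₂ γ₂ lam u p.2 =
      prabhakarKernelTerm α (β₁ + β₂) (γ₁ + γ₂) lam t n := by
  have hΓ : ∀ β : ℝ, 0 < β → ∀ k : ℕ, Complex.Gamma (α * k + β) ≠ 0 := fun β hβ k => by
    rw [Complex.Gamma_ofReal_mul_natCast_add]
    exact ofReal_ne_zero.2 (Real.Gamma_pos_of_pos (by positivity)).ne'
  rw [intervalIntegral.integral_finsetSum fun p _ =>
    intervalIntegrable_prabhakarKernelTerm_mul_prabhakarKernelTerm γ₁ γ₂ lam hα hβ₁ hβ₂ ht _ _]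
  rw [sum_congr rfl fun p hp => by
    rw [integral_prabhakarKernelTerm_mul_prabhakarKernelTerm γ₁ γ₂ lam hα hβ₁ hβ₂ ht,
      mem_antidiagonal.mp hp]]
  rw [← sum_mul, ← sum_mul, sum_antidiagonal_prabhakarCoeff_mul_Gamma γ₁ γ₂ (hΓ β₁ hβ₁)
    (hΓ β₂ hβ₂), prabhakarKernelTerm]
  push_cast
  ring_nf

theorem hasSum_integral_sum_antidiagonal_prabhakarKernelTerm (hα : 0 < α) (hβ₁ : 0 < β₁)
    (hβ₂ : 0 < β₂) (ht : 0 < t) :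
    HasSum (fun n => ∫ u in 0..t, ∑ p ∈ antidiagonal n,
        prabhakarKernelTerm α β₁ γ₁ lam (t - u) p.1 * prabhakarKernelTerm α β₂ γ₂ lam u p.2)
      (∫ u in 0..t, prabhakarKernel α β₁ γ₁ lam (t - u) * prabhakarKernel α β₂ γ₂ lam u) := by
  set z : ℂ := lam * ((t ^ α : ℝ) : ℂ)
  set A : ℕ → ℝ := fun j => ‖prabhakarCoeff α β₁ γ₁ j * z ^ j‖
  set B : ℕ → ℝ := fun k => ‖prabhakarCoeff α β₂ γ₂ k * z ^ k‖
  have hA : Summable A := summable_norm_prabhakarCoeff_mul_pow hα hβ₁ γ₁ z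
  have hB : Summable B := summable_norm_prabhakarCoeff_mul_pow hα hβ₂ γ₂ z
  set M : ℕ → ℝ := fun n => ∑ p ∈ antidiagonal n, A p.1 * B p.2
  have hM : Summable M := summable_sum_mul_antidiagonal_of_summable_norm'
    (hA.congr fun j => (norm_norm _).symm) hA (hB.congr fun k => (norm_norm _).symm) hB
  have hmem : ∀ᵐ u ∂volume, u ∈ Set.uIoc 0 t → 0 < u ∧ 0 < t - u := by
    filter_upwards [Measure.ae_ne volume t] with u hut hu
    rw [Set.uIoc_of_le ht.le] at hu
    exact ⟨hu.1, sub_pos.2 (hu.2.lt_of_ne hut)⟩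
  refine intervalIntegral.hasSum_integral_of_dominated_convergence
    (fun n u => M n * ((t - u) ^ (β₁ - 1) * u ^ (β₂ - 1))) (fun n => ?_) (fun n => ?_)
    (ae_of_all _ fun u _ => hM.mul_right _) ?_ ?_
  · exact Measurable.aestronglyMeasurable (by unfold prabhakarKernelTerm; fun_prop)
  · filter_upwards [hmem] with u hu hu'
    obtain ⟨hu, htu⟩ := hu hu'
    refine (norm_sum_le _ _).trans ?_
    rw [show M n = ∑ p ∈ antidiagonal n, A p.1 * B p.2 from rfl, sum_mul]
    refine sum_le_sum fun p _ => ?_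
    rw [norm_mul]
    calc _ ≤ (t - u) ^ (β₁ - 1) * ‖prabhakarCoeff α β₁ γ₁ p.1 * z ^ p.1‖ *
          (u ^ (β₂ - 1) * ‖prabhakarCoeff α β₂ γ₂ p.2 * z ^ p.2‖) :=
          mul_le_mul (norm_prabhakarKernelTerm_le hα.le htu (by linarith) _)
            (norm_prabhakarKernelTerm_le hα.le hu (by linarith) _) (norm_nonneg _)
            (by positivity)
      _ = _ := by ring
  · simp_rw [tsum_mul_right]
    exact (intervalIntegrable_sub_rpow_mul_rpow hβ₁ hβ₂ ht).const_mul _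
  · filter_upwards [hmem] with u hu hu'
    obtain ⟨hu, htu⟩ := hu hu'
    exact hasSum_sum_antidiagonal_prabhakarKernelTerm hα hβ₁ hβ₂ γ₁ γ₂ lam htu hu

end Convolution

theorem prabhakar_convolution (α β₁ β₂ : ℝ) (hα : 0 < α) (hβ₁ : 0 < β₁) (hβ₂ : 0 < β₂)
    (γ₁ γ₂ lam : ℂ) (t : ℝ) (ht : 0 < t) :
    (∫ u in (0:ℝ)..t,
        (((t - u) ^ (β₁ - 1) : ℝ) : ℂ) * prabhakar α β₁ γ₁ (lam * (((t - u) ^ α : ℝ) : ℂ)) *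
          (((u ^ (β₂ - 1) : ℝ) : ℂ) * prabhakar α β₂ γ₂ (lam * ((u ^ α : ℝ) : ℂ)))) =
      ((t ^ (β₁ + β₂ - 1) : ℝ) : ℂ) * prabhakar α (β₁ + β₂) (γ₁ + γ₂) (lam * ((t ^ α : ℝ) : ℂ)) := by
  have hconv := hasSum_integral_sum_antidiagonal_prabhakarKernelTerm γ₁ γ₂ lam hα hβ₁ hβ₂ ht
  simp only [integral_sum_antidiagonal_prabhakarKernelTerm γ₁ γ₂ lam hα.le hβ₁ hβ₂ ht] at hconv
  have hkernel := hconv.unique (hasSum_prabhakarKernelTerm hα (add_pos hβ₁ hβ₂) ht)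
  simpa only [prabhakarKernel, ofReal_add] using hkernel
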